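/- Let 0 > λ1 > λ2 and a > 0. With y0(t) = a·ψ(t)/(d·(e^{λ1 t} - e^{λ2 t})) and y1(t) = -a·e^{(λ1+λ2)t}·ψ(-t)/(d·(e^{λ1 t} - e^{λ2 t})) for t > 0 and d = λ1·λ2, where ψ(s) = λ1 - λ2 + λ2·e^{λ1 s} - λ1·e^{λ2 s}, the left Poincaré map P_L defined implicitly by P_L(y0(t)) = y1(t) satisfies dy1/dy0 = -ψ(t)/ψ(-t) < 0 for all t > 0; hence P_L is strictly decreasing on (0, +∞). -/

import Mathlib

noncomputable def psi (l1 l2 t : ℝ) : ℝ :=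
  l1 - l2 + l2 * Real.exp (l1 * t) - l1 * Real.exp (l2 * t)

noncomputable def y0fun (a l1 l2 t : ℝ) : ℝ :=
  a * psi l1 l2 t / (l1 * l2 * (Real.exp (l1 * t) - Real.exp (l2 * t)))

noncomputable def y1fun (a l1 l2 t : ℝ) : ℝ :=
  -a * Real.exp ((l1 + l2) * t) * psi l1 l2 (-t) /
    (l1 * l2 * (Real.exp (l1 * t) - Real.exp (l2 * t)))

open Real Set

/-! Since `psi' t = l1 * l2 * (exp (l1 * t) - exp (l2 * t))` has the sign of `t`, `psi` is positive
away from its zero at `0`. Both `y0'` and `y1'` are one positive factor times `psi (-t)` and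
`-psi t` respectively, which gives the ratio; so `y0` increases and `y1` decreases on `(0, ∞)`,
and `P_L = y1 ∘ y0⁻¹` decreases. -/

theorem StrictMonoOn.strictAntiOn_image_of_comp_eq {f g P : ℝ → ℝ} {s : Set ℝ}
    (hf : StrictMonoOn f s) (hg : StrictAntiOn g s) (hP : ∀ x ∈ s, P (f x) = g x) :
    StrictAntiOn P (f '' s) := by
  rintro _ ⟨x, hx, rfl⟩ _ ⟨y, hy, rfl⟩ hxy
  rw [hP x hx, hP y hy]
  exact hg hx hy ((hf.lt_iff_lt hx hy).mp hxy)

theorem hasDerivAt_exp_mul (c t : ℝ) :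
    HasDerivAt (fun s => exp (c * s)) (c * exp (c * t)) t := by
  simpa [mul_comm] using ((hasDerivAt_id t).const_mul c).exp

theorem exp_mul_sub_exp_mul_ne_zero {l1 l2 t : ℝ} (hl : l1 ≠ l2) (ht : t ≠ 0) :
    exp (l1 * t) - exp (l2 * t) ≠ 0 :=
  sub_ne_zero.mpr fun h => hl (mul_right_cancel₀ ht (exp_injective h))

theorem hasDerivAt_psi (l1 l2 t : ℝ) :
    HasDerivAt (psi l1 l2) (l1 * l2 * (exp (l1 * t) - exp (l2 * t))) t := by
  have h := (((hasDerivAt_exp_mul l1 t).const_mul l2).sub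
    ((hasDerivAt_exp_mul l2 t).const_mul l1)).const_add (l1 - l2)
  have hpsi : psi l1 l2 = fun s => l1 - l2 + (l2 * exp (l1 * s) - l1 * exp (l2 * s)) := by
    funext s; simp only [psi]; ring
  rw [hpsi]
  exact h.congr_deriv (by ring)

theorem psi_zero (l1 l2 : ℝ) : psi l1 l2 0 = 0 := by simp [psi]

theorem psi_pos {l1 l2 t : ℝ} (hd : 0 < l1 * l2) (hl : l2 < l1) (ht : t ≠ 0) :
    0 < psi l1 l2 t := by
  have hcont : Continuous (psi l1 l2) :=
    continuous_iff_continuousAt.mpr fun s => (hasDerivAt_psi l1 l2 s).continuousAt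
  rw [← psi_zero l1 l2]
  rcases ht.lt_or_gt with ht | ht
  · refine strictAntiOn_of_deriv_neg (convex_Iic 0) hcont.continuousOn (fun s hs => ?_)
      ht.le self_mem_Iic ht
    rw [interior_Iic] at hs
    rw [(hasDerivAt_psi l1 l2 s).deriv]
    exact mul_neg_of_pos_of_neg hd (sub_neg.mpr (exp_lt_exp.mpr (by nlinarith [hs.out])))
  · refine strictMonoOn_of_deriv_pos (convex_Ici 0) hcont.continuousOn (fun s hs => ?_)
      self_mem_Ici ht.le ht
    rw [interior_Ici] at hs
    rw [(hasDerivAt_psi l1 l2 s).deriv]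
    exact mul_pos hd (sub_pos.mpr (exp_lt_exp.mpr (by nlinarith [hs.out])))

theorem exp_mul_psi_neg (l1 l2 t : ℝ) :
    exp ((l1 + l2) * t) * psi l1 l2 (-t) =
      (l1 - l2) * exp ((l1 + l2) * t) + l2 * exp (l2 * t) - l1 * exp (l1 * t) := by
  have h1 : exp ((l1 + l2) * t) * exp (l1 * -t) = exp (l2 * t) := by
    rw [← exp_add]; ring_nf
  have h2 : exp ((l1 + l2) * t) * exp (l2 * -t) = exp (l1 * t) := by
    rw [← exp_add]; ring_nf
  simp only [psi]
  linear_combination l2 * h1 - l1 * h2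

noncomputable def poincareFactor (a l1 l2 t : ℝ) : ℝ :=
  a * (l1 - l2) * exp (l1 * t) * exp (l2 * t) / (l1 * l2 * (exp (l1 * t) - exp (l2 * t)) ^ 2)

theorem poincareFactor_pos {a l1 l2 t : ℝ} (ha : 0 < a) (hd : 0 < l1 * l2) (hl : l2 < l1)
    (ht : t ≠ 0) : 0 < poincareFactor a l1 l2 t := by
  have hD := exp_mul_sub_exp_mul_ne_zero hl.ne' ht
  have hl' : 0 < l1 - l2 := sub_pos.mpr hl
  unfold poincareFactor
  positivity

theorem hasDerivAt_y0fun (a : ℝ) {l1 l2 t : ℝ} (hd : l1 * l2 ≠ 0) (hl : l1 ≠ l2)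
    (ht : t ≠ 0) :
    HasDerivAt (y0fun a l1 l2) (poincareFactor a l1 l2 t * psi l1 l2 (-t)) t := by
  have hD := exp_mul_sub_exp_mul_ne_zero hl ht
  have hden := ((hasDerivAt_exp_mul l1 t).sub (hasDerivAt_exp_mul l2 t)).const_mul (l1 * l2)
  refine (((hasDerivAt_psi l1 l2 t).const_mul a).div hden (mul_ne_zero hd hD)).congr_deriv ?_
  have h1 : l1 ≠ 0 := left_ne_zero_of_mul hd
  have h2 : l2 ≠ 0 := right_ne_zero_of_mul hd
  simp only [poincareFactor, psi, Pi.sub_apply, mul_neg, exp_neg]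
  field_simp
  ring

theorem hasDerivAt_y1fun (a : ℝ) {l1 l2 t : ℝ} (hd : l1 * l2 ≠ 0) (hl : l1 ≠ l2)
    (ht : t ≠ 0) :
    HasDerivAt (y1fun a l1 l2) (-(poincareFactor a l1 l2 t * psi l1 l2 t)) t := by
  have hD := exp_mul_sub_exp_mul_ne_zero hl ht
  have hy1 : y1fun a l1 l2 = fun s => -a * ((l1 - l2) * exp ((l1 + l2) * s) +
      l2 * exp (l2 * s) - l1 * exp (l1 * s)) / (l1 * l2 * (exp (l1 * s) - exp (l2 * s))) := by
    funext s; rw [y1fun, mul_assoc, exp_mul_psi_neg]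
  have hnum := ((((hasDerivAt_exp_mul (l1 + l2) t).const_mul (l1 - l2)).add
    ((hasDerivAt_exp_mul l2 t).const_mul l2)).sub
    ((hasDerivAt_exp_mul l1 t).const_mul l1)).const_mul (-a)
  have hden := ((hasDerivAt_exp_mul l1 t).sub (hasDerivAt_exp_mul l2 t)).const_mul (l1 * l2)
  rw [hy1]
  refine (hnum.div hden (mul_ne_zero hd hD)).congr_deriv ?_
  have h1 : l1 ≠ 0 := left_ne_zero_of_mul hd
  have h2 : l2 ≠ 0 := right_ne_zero_of_mul hd
  simp only [poincareFactor, psi, Pi.add_apply, Pi.sub_apply, add_mul, exp_add]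
  field_simp
  ring

theorem strictMonoOn_y0fun {a l1 l2 : ℝ} (ha : 0 < a) (hd : 0 < l1 * l2) (hl : l2 < l1) :
    StrictMonoOn (y0fun a l1 l2) (Ioi 0) := by
  have hderiv := fun t (ht : t ∈ Ioi (0 : ℝ)) => hasDerivAt_y0fun a hd.ne' hl.ne' (ne_of_gt ht)
  refine strictMonoOn_of_deriv_pos (convex_Ioi 0)
    (fun t ht => (hderiv t ht).continuousAt.continuousWithinAt) fun t ht => ?_
  rw [interior_Ioi] at ht
  rw [(hderiv t ht).deriv]
  exact mul_pos (poincareFactor_pos ha hd hl (ne_of_gt ht))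
    (psi_pos hd hl (neg_ne_zero.mpr (ne_of_gt ht)))

theorem strictAntiOn_y1fun {a l1 l2 : ℝ} (ha : 0 < a) (hd : 0 < l1 * l2) (hl : l2 < l1) :
    StrictAntiOn (y1fun a l1 l2) (Ioi 0) := by
  have hderiv := fun t (ht : t ∈ Ioi (0 : ℝ)) => hasDerivAt_y1fun a hd.ne' hl.ne' (ne_of_gt ht)
  refine strictAntiOn_of_deriv_neg (convex_Ioi 0)
    (fun t ht => (hderiv t ht).continuousAt.continuousWithinAt) fun t ht => ?_
  rw [interior_Ioi] at ht
  rw [(hderiv t ht).deriv, neg_lt_zero]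
  exact mul_pos (poincareFactor_pos ha hd hl (ne_of_gt ht)) (psi_pos hd hl (ne_of_gt ht))

theorem leftPoincare_strictAnti (a l1 l2 : ℝ) (ha : a > 0) (h1 : 0 > l1) (h2 : l1 > l2) :
    (∀ t : ℝ, t > 0 →
      deriv (fun s => y1fun a l1 l2 s) t / deriv (fun s => y0fun a l1 l2 s) t =
        -psi l1 l2 t / psi l1 l2 (-t) ∧ -psi l1 l2 t / psi l1 l2 (-t) < 0) ∧
    (∀ PL : ℝ → ℝ, (∀ t : ℝ, t > 0 → PL (y0fun a l1 l2 t) = y1fun a l1 l2 t) →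
      StrictAntiOn PL ((fun t => y0fun a l1 l2 t) '' Set.Ioi 0)) := by
  have hd : 0 < l1 * l2 := mul_pos_of_neg_of_neg h1 (h2.trans h1)
  refine ⟨fun t ht => ⟨?_, ?_⟩, fun PL hPL => ?_⟩
  · rw [(hasDerivAt_y1fun a hd.ne' h2.ne' ht.ne').deriv,
      (hasDerivAt_y0fun a hd.ne' h2.ne' ht.ne').deriv, neg_div, neg_div,
      mul_div_mul_left _ _ (poincareFactor_pos ha hd h2 ht.ne').ne']
  · exact div_neg_of_neg_of_pos (neg_neg_of_pos (psi_pos hd h2 ht.ne'))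
      (psi_pos hd h2 (neg_ne_zero.mpr ht.ne'))
  · exact (strictMonoOn_y0fun ha hd h2).strictAntiOn_image_of_comp_eq
      (strictAntiOn_y1fun ha hd h2) hPL
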